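/- Consider the power network η̇ = B_gᵀω_g + B_lᵀD_l⁻¹(−B_lΓ sin(η) − P_l), M ω̇_g = −D_g ω_g − B_g Γ sin(η) + P_m, with ω_l = D_l⁻¹(−B_lΓ sin(η) − P_l), where the generator index set {1,…,n_g} is partitioned into V_{g1} and V_{g2}. For i ∈ V_{g1}: T_{mi}Ṗ_{mi} = −P_{mi} − K_i⁻¹ω_{gi} + θ_i and T_{θi}θ̇_i = −θ_i + P_{mi} − K_i⁻¹(Q L (Qθ + R))_i; for i ∈ V_{g2}: T_{si}Ṗ_{si} = −P_{si} − K_i⁻¹ω_{gi} + θ_i, T_{mi}Ṗ_{mi} = −P_{mi} + P_{si}, and T_{θi}θ̇_i = −θ_i + P_{si} − (1 − K_i⁻¹)ω_{gi} − (Q L (Qθ + R))_i; all time constants, droop constants K_i, and damping constants are positive, L is symmetric positive semidefinite with L·1 = 0, and Q is diagonal positive with R ∈ ℝ^{n_g}. Let (η̄, ω̄_g = 0, P̄_m = P̄_s = θ̄) be a steady state of the closed loop with Qθ̄ + R ∈ span{1}. Then along every differentiable solution, the derivative of V = U + Σ_{i∈V_{g1}} Z_{1i} + Σ_{i∈V_{g2}}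 Z_{2i} equals −ω_lᵀD_lω_l + Σ_{i∈V_{g1}}(−D_{gi}ω_{gi}² − K_i(θ_i − P_{mi})²) + Σ_{i∈V_{g2}} v_iᵀ W_i v_i − (Q(θ − θ̄))ᵀ L (Q(θ − θ̄)), where v_i = (ω_{gi}, P_{si} − P_{mi}, P_{si} − θ_i)ᵀ and W_i is the symmetric matrix with rows (−D_{gi}, −½K_i⁻¹ − ½, −½K_i⁻¹ + ½), (−½K_i⁻¹ − ½, −T_{si}/T_{mi}, −½), (−½K_i⁻¹ + ½, −½, −1); in particular, if each W_i for i ∈ V_{g2} is negative definite, then this derivative is ≤ 0 for all t. -/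

import Mathlib

/-!
The storage functions are chosen so that the cross terms cancel. Using the steady-state
relations `B_g Γ sin η̄ = θ̄` and `B_l Γ sin η̄ = -P_l`, the network storage `U` has derivative
`-ω_lᵀ D_l ω_l - ω_gᵀ D_g ω_g + ω_gᵀ (P_m - θ̄)`. Each governor storage absorbs the supply
`ω_gi (P_mi - θ̄_i)` and leaves its local quadratic dissipation and the controller term
`-Q_i (θ_i - θ̄_i) (L (Qθ + R))_i`. Because `Qθ̄ + R` is a constant vector and `L 1 = 0`, we have
`L (Qθ + R) = L Q (θ - θ̄)`, so the controller terms add up to `-xᵀ L x` with `x = Q (θ - θ̄)`.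
This is nonpositive because `L` is positive semidefinite.
-/

open Matrix

theorem HasDerivAt.half_mul_sq {x : ℝ → ℝ} {x' t : ℝ} (a : ℝ) (hx : HasDerivAt x x' t) :
    HasDerivAt (fun s => a / 2 * x s ^ 2) (a * x t * x') t := by
  refine ((hx.fun_pow 2).const_mul (a / 2)).congr_deriv ?_
  norm_num
  ring

theorem hasDerivAt_networkStorage {ι κ : Type*} [Fintype ι] [Fintype κ] (M : ι → ℝ)
    (γ ηb : κ → ℝ) {ω : ℝ → ι → ℝ} {η : ℝ → κ → ℝ} {ω' : ι → ℝ} {η' : κ → ℝ} {t : ℝ}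
    (hη : HasDerivAt η η' t) (hω : HasDerivAt ω ω' t) :
    HasDerivAt (fun s => (1/2) * (∑ i, M i * (ω s i)^2) - (∑ k, γ k * Real.cos (η s k))
        + (∑ k, γ k * Real.cos (ηb k)) - ∑ k, γ k * Real.sin (ηb k) * (η s k - ηb k))
      (∑ i, M i * ω t i * ω' i
        + ∑ k, (γ k * Real.sin (η t k) - γ k * Real.sin (ηb k)) * η' k) t := by
  have hηk k := hasDerivAt_pi.mp hη k
  have hkin := (HasDerivAt.fun_sum (u := Finset.univ) fun i _ =>
    ((hasDerivAt_pi.mp hω i).fun_pow 2).const_mul (M i)).const_mul (1/2 : ℝ)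
  have hcos := HasDerivAt.fun_sum (u := Finset.univ) fun k _ => ((hηk k).cos).const_mul (γ k)
  have hlin := HasDerivAt.fun_sum (u := Finset.univ) fun k _ =>
    ((hηk k).sub_const (ηb k)).const_mul (γ k * Real.sin (ηb k))
  refine (((hkin.fun_sub hcos).add_const _).fun_sub hlin).congr_deriv ?_
  rw [sub_sub, ← Finset.sum_add_distrib, sub_eq_add_neg, ← Finset.sum_neg_distrib,
    Finset.mul_sum]
  congr 1 <;> refine Finset.sum_congr rfl fun _ _ => ?_
  · norm_num
    ring
  · ring

theorem sum_mul_sum_comm {ι κ : Type*} [Fintype ι] [Fintype κ] (c : κ → ℝ) (b : Matrix ι κ ℝ)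
    (a : ι → ℝ) : ∑ k, c k * ∑ i, b i k * a i = ∑ i, a i * ∑ k, b i k * c k :=
  calc c ⬝ᵥ (bᵀ *ᵥ a) = (b *ᵥ c) ⬝ᵥ a := by rw [dotProduct_mulVec, vecMul_transpose]
    _ = a ⬝ᵥ (b *ᵥ c) := dotProduct_comm _ _

theorem network_dissipation_eq {ι κ ν : Type*} [Fintype ι] [Fintype κ] [Fintype ν]
    (M Dg ω Pm θb : ι → ℝ) (Dl ωl Pl : ν → ℝ) (Bg : Matrix ι κ ℝ) (Bl : Matrix ν κ ℝ)
    (p pb : κ → ℝ) (hM : ∀ i, M i ≠ 0) (hDl : ∀ j, Dl j ≠ 0)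
    (hωl : ∀ j, ωl j = (-(∑ k, Bl j k * p k) - Pl j) / Dl j)
    (hssg : ∀ i, ∑ k, Bg i k * pb k = θb i) (hssl : ∀ j, ∑ k, Bl j k * pb k = -Pl j) :
    ∑ i, M i * ω i * ((-(Dg i * ω i) - (∑ k, Bg i k * p k) + Pm i) / M i)
      + ∑ k, (p k - pb k) * ((∑ i, Bg i k * ω i) + ∑ j, Bl j k * ωl j)
    = ∑ i, (-(Dg i * ω i ^ 2) + ω i * (Pm i - θb i)) - ∑ j, Dl j * ωl j ^ 2 := by
  have hBg : ∀ i, ∑ k, Bg i k * (p k - pb k) = ∑ k, Bg i k * p k - θb i := fun i => by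
    rw [← hssg i, ← Finset.sum_sub_distrib]
    simp only [mul_sub]
  have hBl : ∀ j, ∑ k, Bl j k * (p k - pb k) = -(Dl j * ωl j) := fun j => by
    rw [hωl j, mul_div_cancel₀ _ (hDl j)]
    simp only [mul_sub, Finset.sum_sub_distrib, hssl]
    ring
  rw [Finset.sum_congr rfl fun k _ => mul_add _ _ _, Finset.sum_add_distrib, sum_mul_sum_comm,
    sum_mul_sum_comm]
  simp only [hBg, hBl]
  rw [← add_assoc, ← Finset.sum_add_distrib, sub_eq_add_neg _ (∑ j, _), ← Finset.sum_neg_distrib]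
  congr 1 <;> refine Finset.sum_congr rfl fun i _ => ?_
  · field_simp [hM i]
    ring
  · ring

theorem Matrix.mulVec_add_const_of_mulVec_one {m n R : Type*} [Fintype n] [CommRing R]
    (L : Matrix m n R) (hL1 : L *ᵥ (fun _ => (1 : R)) = 0) {x y : n → R} (c : R)
    (hy : ∀ j, y j = x j + c) : L *ᵥ y = L *ᵥ x := by
  have : y = x + c • fun _ => 1 := funext fun j => by simp [hy j]
  rw [this, mulVec_add, mulVec_smul, hL1, smul_zero, add_zero]

theorem Matrix.dotProduct_mulVec_nonpos_of_neg {n : Type*} [Fintype n] {W : Matrix n n ℝ}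
    (hW : ∀ w, w ≠ 0 → w ⬝ᵥ (W *ᵥ w) < 0) (v : n → ℝ) : v ⬝ᵥ (W *ᵥ v) ≤ 0 := by
  rcases eq_or_ne v 0 with rfl | hv
  · simp
  · exact (hW v hv).le

theorem Finset.sum_sub_add_sum_compl_sub {ι β : Type*} [Fintype ι] [DecidableEq ι]
    [AddCommGroup β] (s : Finset ι) (f g e : ι → β) :
    ∑ i ∈ s, (f i - e i) + ∑ i ∈ sᶜ, (g i - e i) = ∑ i ∈ s, f i + ∑ i ∈ sᶜ, g i - ∑ i, e i := by
  rw [Finset.sum_sub_distrib, Finset.sum_sub_distrib, ← Finset.sum_add_sum_compl s e]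
  abel

-- The damping `D ω²` is counted in the supply so that both governor types subtract the same term.
theorem hasDerivAt_firstOrderStorage {θ Pm : ℝ → ℝ} {t : ℝ} (D K Tθ Tm q θb ω Λ : ℝ)
    (hK : K ≠ 0) (hTθ : Tθ ≠ 0) (hTm : Tm ≠ 0)
    (hθ : HasDerivAt θ ((-θ t + Pm t - K⁻¹ * (q * Λ)) / Tθ) t)
    (hPm : HasDerivAt Pm ((-Pm t - K⁻¹ * ω + θ t) / Tm) t) :
    HasDerivAt (fun s => Tθ * K / 2 * (θ s - θb) ^ 2 + Tm * K / 2 * (Pm s - θb) ^ 2)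
      ((-(D * ω ^ 2) - K * (θ t - Pm t) ^ 2)
        - (-(D * ω ^ 2) + ω * (Pm t - θb) + q * (θ t - θb) * Λ)) t := by
  refine (((hθ.sub_const θb).half_mul_sq (Tθ * K)).add
    ((hPm.sub_const θb).half_mul_sq (Tm * K))).congr_deriv ?_
  field_simp
  ring

theorem hasDerivAt_secondOrderStorage {θ Pm Ps : ℝ → ℝ} {t : ℝ} (D K Tθ Ts Tm q θb ω Λ : ℝ)
    {W : Matrix (Fin 3) (Fin 3) ℝ} (hK : K ≠ 0) (hTθ : Tθ ≠ 0) (hTs : Ts ≠ 0) (hTm : Tm ≠ 0)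
    (hW : W = !![-D,              -(K⁻¹/2) - 1/2, -(K⁻¹/2) + 1/2;
                 -(K⁻¹/2) - 1/2, -(Ts / Tm),      -(1/2);
                 -(K⁻¹/2) + 1/2, -(1/2),          -1])
    (hθ : HasDerivAt θ ((-θ t + Ps t - (1 - K⁻¹) * ω - q * Λ) / Tθ) t)
    (hPs : HasDerivAt Ps ((-Ps t - K⁻¹ * ω + θ t) / Ts) t)
    (hPm : HasDerivAt Pm ((-Pm t + Ps t) / Tm) t) :
    HasDerivAt (fun s => Tθ / 2 * (θ s - θb) ^ 2 + Ts / 2 * (Ps s - θb) ^ 2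
        + Ts / 2 * (Pm s - Ps s) ^ 2)
      (![ω, Ps t - Pm t, Ps t - θ t] ⬝ᵥ (W *ᵥ ![ω, Ps t - Pm t, Ps t - θ t])
        - (-(D * ω ^ 2) + ω * (Pm t - θb) + q * (θ t - θb) * Λ)) t := by
  refine ((((hθ.sub_const θb).half_mul_sq Tθ).add ((hPs.sub_const θb).half_mul_sq Ts)).add
    ((hPm.fun_sub hPs).half_mul_sq Ts)).congr_deriv ?_
  subst hW
  simp only [dotProduct, mulVec, Fin.sum_univ_three, cons_val_zero, cons_val_one, cons_val_two,
    of_apply, Nat.succ_eq_add_one, Nat.reduceAdd, tail_cons, head_cons]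
  field_simp
  ring

theorem dissipation_nonpos {ι ν : Type*} [Fintype ι] [DecidableEq ι] [Fintype ν]
    (s : Finset ι) {Dl ωl : ν → ℝ} {D K ω d x : ι → ℝ} {W : ι → Matrix (Fin 3) (Fin 3) ℝ}
    {L : Matrix ι ι ℝ} (v : ι → Fin 3 → ℝ) (hDl : ∀ j, 0 ≤ Dl j) (hD : ∀ i, 0 ≤ D i)
    (hK : ∀ i, 0 ≤ K i) (hW : ∀ i ∈ sᶜ, ∀ w, w ≠ 0 → w ⬝ᵥ (W i *ᵥ w) < 0)
    (hL : L.PosSemidef) :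
    -(∑ j, Dl j * ωl j ^ 2) + ∑ i ∈ s, (-(D i * ω i ^ 2) - K i * d i ^ 2)
      + ∑ i ∈ sᶜ, v i ⬝ᵥ (W i *ᵥ v i) - x ⬝ᵥ (L *ᵥ x) ≤ 0 := by
  refine sub_nonpos_of_le (le_trans ?_ (by simpa using hL.dotProduct_mulVec_nonneg x))
  refine add_nonpos (add_nonpos ?_ ?_) ?_
  · exact neg_nonpos.mpr (Finset.sum_nonneg fun j _ => mul_nonneg (hDl j) (sq_nonneg _))
  · refine Finset.sum_nonpos fun i _ => ?_
    nlinarith [mul_nonneg (hD i) (sq_nonneg (ω i)), mul_nonneg (hK i) (sq_nonneg (d i))]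
  · exact Finset.sum_nonpos fun i hi => dotProduct_mulVec_nonpos_of_neg (hW i hi) _

theorem closed_loop_dissipation_general {m ng nl : ℕ}
    (M Dg K Tθ Tm Ts Q R : Fin ng → ℝ) (Dl : Fin nl → ℝ) (γ : Fin m → ℝ)
    (Pl : Fin nl → ℝ)
    (hM : ∀ i, 0 < M i) (hDg : ∀ i, 0 < Dg i) (hK : ∀ i, 0 < K i)
    (hTθ : ∀ i, 0 < Tθ i) (hTm : ∀ i, 0 < Tm i) (hTs : ∀ i, 0 < Ts i)
    (hDl : ∀ j, 0 < Dl j)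
    (Bg : Matrix (Fin ng) (Fin m) ℝ) (Bl : Matrix (Fin nl) (Fin m) ℝ)
    (L : Matrix (Fin ng) (Fin ng) ℝ) (hL : L.PosSemidef)
    (hL1 : L *ᵥ (fun _ => (1 : ℝ)) = 0)
    (Vg1 : Finset (Fin ng))
    (η : ℝ → Fin m → ℝ) (ωg Pm Ps θ : ℝ → Fin ng → ℝ) (ωl : ℝ → Fin nl → ℝ)
    -- ω_l = D_l⁻¹(−B_l Γ sin(η) − P_l) :
    (hωl : ∀ t j, ωl t j
      = (-(∑ k, Bl j k * (γ k * Real.sin (η t k))) - Pl j) / Dl j)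
    -- η̇ = B_gᵀ ω_g + B_lᵀ ω_l :
    (hη : ∀ t, HasDerivAt η
      (fun k => (∑ i, Bg i k * ωg t i) + ∑ j, Bl j k * ωl t j) t)
    -- M ω̇_g = −D_g ω_g − B_g Γ sin(η) + P_m :
    (hωg : ∀ t, HasDerivAt ωg
      (fun i => (-(Dg i * ωg t i)
        - (∑ k, Bg i k * (γ k * Real.sin (η t k))) + Pm t i) / M i) t)
    -- first-order turbine-governors with controllers, i ∈ V_{g1} :
    (hPm1 : ∀ t, ∀ i ∈ Vg1, HasDerivAt (fun s => Pm s i)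
      ((-(Pm t i) - (K i)⁻¹ * ωg t i + θ t i) / Tm i) t)
    (hθ1 : ∀ t, ∀ i ∈ Vg1, HasDerivAt (fun s => θ s i)
      ((-(θ t i) + Pm t i
        - (K i)⁻¹ * (Q i * ∑ j, L i j * (Q j * θ t j + R j))) / Tθ i) t)
    -- second-order turbine-governors with controllers, i ∈ V_{g2} = V_{g1}ᶜ :
    (hPs2 : ∀ t, ∀ i ∈ Vg1ᶜ, HasDerivAt (fun s => Ps s i)
      ((-(Ps t i) - (K i)⁻¹ * ωg t i + θ t i) / Ts i) t)
    (hPm2 : ∀ t, ∀ i ∈ Vg1ᶜ, HasDerivAt (fun s => Pm s i)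
      ((-(Pm t i) + Ps t i) / Tm i) t)
    (hθ2 : ∀ t, ∀ i ∈ Vg1ᶜ, HasDerivAt (fun s => θ s i)
      ((-(θ t i) + Ps t i - (1 - (K i)⁻¹) * ωg t i
        - Q i * ∑ j, L i j * (Q j * θ t j + R j)) / Tθ i) t)
    -- steady state (η̄, ω̄ = 0, P̄_m = P̄_s = θ̄) with identical marginal costs :
    (ηb : Fin m → ℝ) (θb : Fin ng → ℝ)
    (hssg : ∀ i, 0 = -(∑ k, Bg i k * (γ k * Real.sin (ηb k))) + θb i)
    (hssl : ∀ j, 0 = -(∑ k, Bl j k * (γ k * Real.sin (ηb k))) - Pl j)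
    (hmc : ∃ c : ℝ, ∀ i, Q i * θb i + R i = c)
    -- V = U + Σ_{i ∈ V_{g1}} Z₁ᵢ + Σ_{i ∈ V_{g2}} Z₂ᵢ :
    (V : ℝ → ℝ)
    (hV : ∀ t, V t =
      ((1/2) * (∑ i, M i * (ωg t i)^2) - (∑ k, γ k * Real.cos (η t k))
        + (∑ k, γ k * Real.cos (ηb k))
        - ∑ k, γ k * Real.sin (ηb k) * (η t k - ηb k))
      + (∑ i ∈ Vg1, (Tθ i * K i / 2 * (θ t i - θb i)^2
          + Tm i * K i / 2 * (Pm t i - θb i)^2))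
      + ∑ i ∈ Vg1ᶜ, (Tθ i / 2 * (θ t i - θb i)^2
          + Ts i / 2 * (Ps t i - θb i)^2 + Ts i / 2 * (Pm t i - Ps t i)^2))
    (Wmat : Fin ng → Matrix (Fin 3) (Fin 3) ℝ)
    (hW : ∀ i, Wmat i
      = !![-Dg i,              -((K i)⁻¹/2) - 1/2, -((K i)⁻¹/2) + 1/2;
           -((K i)⁻¹/2) - 1/2, -(Ts i / Tm i),     -(1/2);
           -((K i)⁻¹/2) + 1/2, -(1/2),             -1])
    (rhs : ℝ → ℝ)
    (hrhs : ∀ t, rhs t =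
      -(∑ j, Dl j * (ωl t j)^2)
      + (∑ i ∈ Vg1, (-(Dg i * (ωg t i)^2) - K i * (θ t i - Pm t i)^2))
      + (∑ i ∈ Vg1ᶜ, (![ωg t i, Ps t i - Pm t i, Ps t i - θ t i] ⬝ᵥ
          (Wmat i *ᵥ ![ωg t i, Ps t i - Pm t i, Ps t i - θ t i])))
      - (fun i => Q i * (θ t i - θb i)) ⬝ᵥ (L *ᵥ fun i => Q i * (θ t i - θb i))) :
    (∀ t, HasDerivAt V (rhs t) t) ∧
      ((∀ i ∈ Vg1ᶜ, ∀ w : Fin 3 → ℝ, w ≠ 0 → w ⬝ᵥ (Wmat i *ᵥ w) < 0) →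
        ∀ t, rhs t ≤ 0) := by
  obtain ⟨c, hc⟩ := hmc
  have hΛ : ∀ t i, ∑ j, L i j * (Q j * θ t j + R j)
      = (L *ᵥ fun j => Q j * (θ t j - θb j)) i := fun t i =>
    congrFun (L.mulVec_add_const_of_mulVec_one hL1 c fun j => by linear_combination hc j) i
  refine ⟨fun t => ?_, fun hWneg t => ?_⟩
  · have hU := (hasDerivAt_networkStorage M γ ηb (hη t) (hωg t)).congr_deriv
      (network_dissipation_eq M Dg (ωg t) (Pm t) θb Dl (ωl t) Pl Bg Bl _ _
        (fun i => (hM i).ne') (fun j => (hDl j).ne') (hωl t) (fun i => by linarith [hssg i])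
        (fun j => by linarith [hssl j]))
    have hZ1 := HasDerivAt.fun_sum fun i hi =>
      hasDerivAt_firstOrderStorage (θ := fun s => θ s i) (Pm := fun s => Pm s i)
        (Dg i) (K i) (Tθ i) (Tm i) (Q i) (θb i) (ωg t i) _
        (hK i).ne' (hTθ i).ne' (hTm i).ne' (hθ1 t i hi) (hPm1 t i hi)
    have hZ2 := HasDerivAt.fun_sum fun i hi =>
      hasDerivAt_secondOrderStorage (θ := fun s => θ s i) (Pm := fun s => Pm s i)
        (Ps := fun s => Ps s i) (Dg i) (K i) (Tθ i) (Ts i) (Tm i) (Q i) (θb i) (ωg t i) _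
        (hK i).ne' (hTθ i).ne' (hTs i).ne' (hTm i).ne' (hW i) (hθ2 t i hi) (hPs2 t i hi)
        (hPm2 t i hi)
    rw [show V = _ from funext hV]
    refine ((hU.fun_add hZ1).fun_add hZ2).congr_deriv ?_
    rw [add_assoc, Finset.sum_sub_add_sum_compl_sub, hrhs]
    simp only [Finset.sum_add_distrib, hΛ]
    rw [dotProduct]
    ring
  · rw [hrhs]
    exact dissipation_nonpos Vg1 (fun i => ![ωg t i, Ps t i - Pm t i, Ps t i - θ t i])
      (fun j => (hDl j).le) (fun i => (hDg i).le) (fun i => (hK i).le) hWneg hL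

/-- Dissipation identity for the closed loop of the power network, first- and
second-order turbine-governors and the distributed consensus-based controllers:
the derivative of `V = U + Σ Z₁ᵢ + Σ Z₂ᵢ` equals the stated expression, which
is nonpositive whenever each `Wᵢ`, `i ∈ V_{g2}`, is negative definite. -/
theorem closed_loop_dissipation {m ng nl : ℕ}
    (M Dg K Tθ Tm Ts Q R : Fin ng → ℝ) (Dl : Fin nl → ℝ) (γ : Fin m → ℝ)
    (Pl : Fin nl → ℝ)
    (hM : ∀ i, 0 < M i) (hDg : ∀ i, 0 < Dg i) (hK : ∀ i, 0 < K i)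
    (hTθ : ∀ i, 0 < Tθ i) (hTm : ∀ i, 0 < Tm i) (hTs : ∀ i, 0 < Ts i)
    (hQ : ∀ i, 0 < Q i) (hDl : ∀ j, 0 < Dl j) (hγ : ∀ k, 0 < γ k)
    (Bg : Matrix (Fin ng) (Fin m) ℝ) (Bl : Matrix (Fin nl) (Fin m) ℝ)
    (L : Matrix (Fin ng) (Fin ng) ℝ) (hL : L.PosSemidef)
    (hL1 : L *ᵥ (fun _ => (1 : ℝ)) = 0)
    (Vg1 : Finset (Fin ng))
    (η : ℝ → Fin m → ℝ) (ωg Pm Ps θ : ℝ → Fin ng → ℝ) (ωl : ℝ → Fin nl → ℝ)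
    -- ω_l = D_l⁻¹(−B_l Γ sin(η) − P_l) :
    (hωl : ∀ t j, ωl t j
      = (-(∑ k, Bl j k * (γ k * Real.sin (η t k))) - Pl j) / Dl j)
    -- η̇ = B_gᵀ ω_g + B_lᵀ ω_l :
    (hη : ∀ t, HasDerivAt η
      (fun k => (∑ i, Bg i k * ωg t i) + ∑ j, Bl j k * ωl t j) t)
    -- M ω̇_g = −D_g ω_g − B_g Γ sin(η) + P_m :
    (hωg : ∀ t, HasDerivAt ωg
      (fun i => (-(Dg i * ωg t i)
        - (∑ k, Bg i k * (γ k * Real.sin (η t k))) + Pm t i) / M i) t)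
    -- first-order turbine-governors with controllers, i ∈ V_{g1} :
    (hPm1 : ∀ t, ∀ i ∈ Vg1, HasDerivAt (fun s => Pm s i)
      ((-(Pm t i) - (K i)⁻¹ * ωg t i + θ t i) / Tm i) t)
    (hθ1 : ∀ t, ∀ i ∈ Vg1, HasDerivAt (fun s => θ s i)
      ((-(θ t i) + Pm t i
        - (K i)⁻¹ * (Q i * ∑ j, L i j * (Q j * θ t j + R j))) / Tθ i) t)
    -- second-order turbine-governors with controllers, i ∈ V_{g2} = V_{g1}ᶜ :
    (hPs2 : ∀ t, ∀ i ∈ Vg1ᶜ, HasDerivAt (fun s => Ps s i)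
      ((-(Ps t i) - (K i)⁻¹ * ωg t i + θ t i) / Ts i) t)
    (hPm2 : ∀ t, ∀ i ∈ Vg1ᶜ, HasDerivAt (fun s => Pm s i)
      ((-(Pm t i) + Ps t i) / Tm i) t)
    (hθ2 : ∀ t, ∀ i ∈ Vg1ᶜ, HasDerivAt (fun s => θ s i)
      ((-(θ t i) + Ps t i - (1 - (K i)⁻¹) * ωg t i
        - Q i * ∑ j, L i j * (Q j * θ t j + R j)) / Tθ i) t)
    -- steady state (η̄, ω̄ = 0, P̄_m = P̄_s = θ̄) with identical marginal costs :
    (ηb : Fin m → ℝ) (θb : Fin ng → ℝ)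
    (hssg : ∀ i, 0 = -(∑ k, Bg i k * (γ k * Real.sin (ηb k))) + θb i)
    (hssl : ∀ j, 0 = -(∑ k, Bl j k * (γ k * Real.sin (ηb k))) - Pl j)
    (hmc : ∃ c : ℝ, ∀ i, Q i * θb i + R i = c)
    -- V = U + Σ_{i ∈ V_{g1}} Z₁ᵢ + Σ_{i ∈ V_{g2}} Z₂ᵢ :
    (V : ℝ → ℝ)
    (hV : ∀ t, V t =
      ((1/2) * (∑ i, M i * (ωg t i)^2) - (∑ k, γ k * Real.cos (η t k))
        + (∑ k, γ k * Real.cos (ηb k))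
        - ∑ k, γ k * Real.sin (ηb k) * (η t k - ηb k))
      + (∑ i ∈ Vg1, (Tθ i * K i / 2 * (θ t i - θb i)^2
          + Tm i * K i / 2 * (Pm t i - θb i)^2))
      + ∑ i ∈ Vg1ᶜ, (Tθ i / 2 * (θ t i - θb i)^2
          + Ts i / 2 * (Ps t i - θb i)^2 + Ts i / 2 * (Pm t i - Ps t i)^2))
    (Wmat : Fin ng → Matrix (Fin 3) (Fin 3) ℝ)
    (hW : ∀ i, Wmat i
      = !![-Dg i,              -((K i)⁻¹/2) - 1/2, -((K i)⁻¹/2) + 1/2;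
           -((K i)⁻¹/2) - 1/2, -(Ts i / Tm i),     -(1/2);
           -((K i)⁻¹/2) + 1/2, -(1/2),             -1])
    (rhs : ℝ → ℝ)
    (hrhs : ∀ t, rhs t =
      -(∑ j, Dl j * (ωl t j)^2)
      + (∑ i ∈ Vg1, (-(Dg i * (ωg t i)^2) - K i * (θ t i - Pm t i)^2))
      + (∑ i ∈ Vg1ᶜ, (![ωg t i, Ps t i - Pm t i, Ps t i - θ t i] ⬝ᵥ
          (Wmat i *ᵥ ![ωg t i, Ps t i - Pm t i, Ps t i - θ t i])))
      - (fun i => Q i * (θ t i - θb i)) ⬝ᵥ (L *ᵥ fun i => Q i * (θ t i - θb i))) :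
    (∀ t, HasDerivAt V (rhs t) t) ∧
      ((∀ i ∈ Vg1ᶜ, ∀ w : Fin 3 → ℝ, w ≠ 0 → w ⬝ᵥ (Wmat i *ᵥ w) < 0) →
        ∀ t, rhs t ≤ 0) :=
  closed_loop_dissipation_general M Dg K Tθ Tm Ts Q R Dl γ Pl hM hDg hK hTθ hTm hTs hDl Bg Bl L hL
    hL1 Vg1 η ωg Pm Ps θ ωl hωl hη hωg hPm1 hθ1 hPs2 hPm2 hθ2 ηb θb hssg hssl hmc V hV Wmat hW rhs
    hrhs
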